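/- arXiv:1305.2143 — 3 statements merged into one kernel-verified Lean document; each statement's English description precedes it below -/
import Mathlib

section
/- For every integer n ≥ 0, the finite-sum identity Σ_{k=0}^{n} (1/2^{4k})·C(2k,k)²·(1/(2n−2k+1)) = Σ_{k=0}^{n} (1/2^{4k})·C(2k,k)²·(1/(n+k+1)) holds, where C(2k,k) denotes the central binomial coefficient. -/
/-!
Write `d n k` for the difference of the two summands and `S n = ∑_{k ≤ n} d n k`. Zeilberger's
algorithm finds a rational certificate `R` such that, with `G n k = C(2k,k)² 16⁻ᵏ R n k`,
`4(n+1)² d n k - (8n²+28n+25) d (n+1) k + (2n+5)² d (n+2) k = G n (k+1) - G n k`.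
Summing over `k ≤ n` telescopes the right side to `G n (n+1)` (as `G n 0 = 0`), which is exactly
the contribution of the terms `k = n+1, n+2` missing from `S (n+1)` and `S (n+2)`. Hence `S` obeys
a second-order recurrence with nonvanishing leading coefficient `(2n+5)²`, and `S 0 = S 1 = 0`.
-/

namespace WZSumIdentity

def weight (k : ℕ) : ℚ := (k.centralBinom : ℚ) ^ 2 / 16 ^ k

lemma weight_succ (k : ℕ) :
    weight (k + 1) = (2 * k + 1) ^ 2 / (4 * (k + 1) ^ 2) * weight k := by
  have h : ((k + 1) * (k + 1).centralBinom : ℚ) = 2 * (2 * k + 1) * k.centralBinom := by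
    exact_mod_cast Nat.succ_mul_centralBinom_succ k
  have hk : (k + 1 : ℚ) ≠ 0 := by positivity
  have hcb : ((k + 1).centralBinom : ℚ) = 2 * (2 * k + 1) * k.centralBinom / (k + 1) := by
    rw [eq_div_iff hk]
    linear_combination h
  rw [weight, weight, hcb]
  field_simp
  ring

lemma weight_eq (k : ℕ) : weight k = 1 / 2 ^ (4 * k) * (Nat.choose (2 * k) k : ℚ) ^ 2 := by
  rw [weight, Nat.centralBinom_eq_two_mul_choose, pow_mul]
  norm_num
  ring

def summand (n k : ℕ) : ℚ := weight k * (1 / (2 * n - 2 * k + 1) - 1 / (n + k + 1))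

/-- Numerator and denominator of Zeilberger's certificate `R`. -/
def certificateNum (x y : ℚ) : ℚ :=
  y ^ 2 * (228 + 796 * x + 840 * x ^ 2 + 344 * x ^ 3 + 48 * x ^ 4)
  + y ^ 3 * (-500 - 768 * x - 312 * x ^ 2 - 32 * x ^ 3)
  + y ^ 4 * (120 + 72 * x) + y ^ 5 * (-40 + 32 * x) - 48 * y ^ 6

def certificateDen (x y : ℚ) : ℚ :=
  (2 * (x - y) + 1) * (2 * (x - y) + 3) * (2 * (x - y) + 5) *
    (x + y + 1) * (x + y + 2) * (x + y + 3)

def certificate (n k : ℕ) : ℚ := weight k * (certificateNum n k / certificateDen n k)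

lemma ne_zero_of_eq_two_mul_add_one {R : Type*} [Ring R] [CharZero R] {q : R} (m : ℤ)
    (h : q = 2 * m + 1) : q ≠ 0 := by
  rw [h]
  exact_mod_cast (by omega : 2 * m + 1 ≠ 0)

lemma certificate_rational_identity (n k : ℕ) :
    4 * (n + 1) ^ 2 * (1 / (2 * (n - k) + 1) - 1 / (n + k + 1))
      - (8 * n ^ 2 + 28 * n + 25) * (1 / (2 * (n - k) + 3) - 1 / (n + k + 2))
      + (2 * n + 5) ^ 2 * (1 / (2 * (n - k) + 5) - 1 / (n + k + 3))
    = (2 * k + 1) ^ 2 / (4 * (k + 1) ^ 2) * (certificateNum n (k + 1) /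
        ((2 * (n - k) - 1) * (2 * (n - k) + 1) * (2 * (n - k) + 3) *
          (n + k + 2) * (n + k + 3) * (n + k + 4)))
      - certificateNum n k /
        ((2 * (n - k) + 1) * (2 * (n - k) + 3) * (2 * (n - k) + 5) *
          (n + k + 1) * (n + k + 2) * (n + k + 3)) := by
  have hm₁ : (2 * (n - k) - 1 : ℚ) ≠ 0 :=
    ne_zero_of_eq_two_mul_add_one (n - k - 1) (by push_cast; ring)
  have h₁ : (2 * (n - k) + 1 : ℚ) ≠ 0 :=
    ne_zero_of_eq_two_mul_add_one (n - k) (by push_cast; ring)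
  have h₃ : (2 * (n - k) + 3 : ℚ) ≠ 0 :=
    ne_zero_of_eq_two_mul_add_one (n - k + 1) (by push_cast; ring)
  have h₅ : (2 * (n - k) + 5 : ℚ) ≠ 0 :=
    ne_zero_of_eq_two_mul_add_one (n - k + 2) (by push_cast; ring)
  unfold certificateNum
  field_simp
  ring

lemma summand_recurrence (n k : ℕ) :
    4 * (n + 1) ^ 2 * summand n k - (8 * n ^ 2 + 28 * n + 25) * summand (n + 1) k
      + (2 * n + 5) ^ 2 * summand (n + 2) k = certificate n (k + 1) - certificate n k := by
  simp only [summand, certificate, certificateDen, weight_succ]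
  push_cast
  linear_combination weight k * certificate_rational_identity n k

lemma certificate_zero (n : ℕ) : certificate n 0 = 0 := by
  simp [certificate, certificateNum]

lemma certificate_diag (n : ℕ) :
    certificate n (n + 1) = (8 * n ^ 2 + 28 * n + 25) * summand (n + 1) (n + 1)
      - (2 * n + 5) ^ 2 * (summand (n + 2) (n + 1) + summand (n + 2) (n + 2)) := by
  simp only [certificate, summand, certificateNum, certificateDen, weight_succ (n + 1)]
  have hm : ((n : ℚ) - (n + 1)) = -1 := by ring
  have h₁ : (2 * ((n : ℚ) + 1) - 2 * (n + 1) + 1) = 1 := by ring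
  have h₂ : (2 * ((n : ℚ) + 2) - 2 * (n + 1) + 1) = 3 := by ring
  have h₃ : (2 * ((n : ℚ) + 2) - 2 * (n + 2) + 1) = 1 := by ring
  push_cast
  rw [hm, h₁, h₂, h₃]
  field_simp
  ring

def diffSum (n : ℕ) : ℚ := ∑ k ∈ Finset.range (n + 1), summand n k

lemma diffSum_recurrence (n : ℕ) :
    4 * (n + 1) ^ 2 * diffSum n - (8 * n ^ 2 + 28 * n + 25) * diffSum (n + 1)
      + (2 * n + 5) ^ 2 * diffSum (n + 2) = 0 := by
  have htele : ∑ k ∈ Finset.range (n + 1), (4 * (n + 1) ^ 2 * summand n k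
      - (8 * n ^ 2 + 28 * n + 25) * summand (n + 1) k + (2 * n + 5) ^ 2 * summand (n + 2) k)
      = certificate n (n + 1) - certificate n 0 := by
    rw [← Finset.sum_range_sub]
    exact Finset.sum_congr rfl fun k _ => summand_recurrence n k
  rw [Finset.sum_add_distrib, Finset.sum_sub_distrib, ← Finset.mul_sum, ← Finset.mul_sum,
    ← Finset.mul_sum, certificate_zero, certificate_diag] at htele
  rw [diffSum, diffSum, diffSum, Finset.sum_range_succ _ (n + 1), Finset.sum_range_succ _ (n + 2),
    Finset.sum_range_succ _ (n + 1)]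
  linear_combination htele

lemma diffSum_eq_zero (n : ℕ) : diffSum n = 0 := by
  induction n using Nat.twoStepInduction with
  | zero => norm_num [diffSum, summand]
  | one =>
    norm_num [diffSum, summand, weight, Nat.centralBinom_eq_two_mul_choose, Finset.sum_range_succ]
  | more n ih₀ ih₁ =>
    have h := diffSum_recurrence n
    rw [ih₀, ih₁] at h
    have : (2 * n + 5 : ℚ) ^ 2 ≠ 0 := by positivity
    simpa [this] using h

end WZSumIdentity

open WZSumIdentity in
/-- Σ_{k=0}^{n} 2^{−4k} C(2k,k)² /(2n−2k+1) = Σ_{k=0}^{n} 2^{−4k} C(2k,k)² /(n+k+1). -/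
theorem wz_sum_identity_one (n : ℕ) :
    ∑ k ∈ Finset.range (n + 1),
        (1 / 2 ^ (4 * k) : ℚ) * (Nat.choose (2 * k) k : ℚ) ^ 2 *
          (1 / (2 * (n : ℚ) - 2 * (k : ℚ) + 1)) =
      ∑ k ∈ Finset.range (n + 1),
        (1 / 2 ^ (4 * k) : ℚ) * (Nat.choose (2 * k) k : ℚ) ^ 2 *
          (1 / ((n : ℚ) + (k : ℚ) + 1)) := by
  rw [← sub_eq_zero, ← Finset.sum_sub_distrib, ← diffSum_eq_zero n, diffSum]
  refine Finset.sum_congr rfl fun k _ => ?_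
  rw [summand, weight_eq]
  ring
end

section
/- For every integer n ≥ 0, the finite-sum identity Σ_{k=0}^{n} (1/2^{4k})·C(2k,k)²·(1/(n+k+1)) = (2^{4n}/((2n+1)²·C(2n,n)²))·Σ_{k=0}^{n} ((4k+1)/2^{8k})·C(2k,k)⁴ holds, where C(2k,k) denotes the central binomial coefficient. -/
/-!
A Wilf–Zeilberger proof. After multiplying by `c n = (2n+1)² C(2n,n)² / 16ⁿ`, the left-hand side
is `∑ₖ F n k` with `F n k = c n · C(2k,k)² / (16ᵏ (n+k+1))`, and `F` pairs with the certificate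
`G n k = F n k · k² / (n+1)²`: `F (n+1) k - F n k = G n (k+1) - G n k`. Summing over `k`
telescopes, so the normalized sum grows from `n` to `n + 1` by `F (n+1) (n+1) + G n (n+1)`,
which is exactly the new term `(4n+5) C(2n+2,n+1)⁴ / 256ⁿ⁺¹` of the right-hand side.
-/

open Finset Nat

theorem Finset.sum_range_succ_succ_of_wz {M : Type*} [AddCommGroup M] (F G : ℕ → ℕ → M) (n : ℕ)
    (hwz : ∀ k, F (n + 1) k - F n k = G n (k + 1) - G n k) :
    ∑ k ∈ range (n + 2), F (n + 1) k =
      ∑ k ∈ range (n + 1), F n k + (F (n + 1) (n + 1) + (G n (n + 1) - G n 0)) := by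
  have htele : ∑ k ∈ range (n + 1), (F (n + 1) k - F n k) = G n (n + 1) - G n 0 := by
    simp only [hwz, sum_range_sub (G n)]
  rw [sum_range_succ, ← htele, sum_sub_distrib]
  abel

theorem Nat.cast_centralBinom_succ {K : Type*} [Field K] [CharZero K] (k : ℕ) :
    (centralBinom (k + 1) : K) = 2 * (2 * k + 1) / (k + 1) * centralBinom k := by
  rw [div_mul_eq_mul_div, eq_div_iff (Nat.cast_add_one_ne_zero k), mul_comm]
  exact_mod_cast succ_mul_centralBinom_succ k

namespace WZCentralBinom

def normalizer (n : ℕ) : ℚ := (2 * n + 1) ^ 2 * (centralBinom n : ℚ) ^ 2 / 16 ^ n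

def F (n k : ℕ) : ℚ := normalizer n * ((centralBinom k : ℚ) ^ 2 / (16 ^ k * (n + k + 1)))

def G (n k : ℕ) : ℚ := F n k * k ^ 2 / (n + 1) ^ 2

theorem F_succ_sub (n k : ℕ) : F (n + 1) k - F n k = G n (k + 1) - G n k := by
  have := centralBinom_ne_zero n
  simp only [G, F, normalizer, cast_centralBinom_succ]
  push_cast
  field_simp
  ring

theorem F_diag_add_G (n : ℕ) :
    F (n + 1) (n + 1) + (G n (n + 1) - G n 0) =
      (4 * (n + 1 : ℕ) + 1) * (centralBinom (n + 1) : ℚ) ^ 4 / 256 ^ (n + 1) := by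
  have := centralBinom_ne_zero n
  have h256 : (256 : ℚ) = 16 * 16 := by norm_num
  simp only [G, F, normalizer, cast_centralBinom_succ, h256, mul_pow]
  push_cast
  field_simp
  ring

theorem sum_F (n : ℕ) :
    ∑ k ∈ range (n + 1), F n k =
      ∑ k ∈ range (n + 1), (4 * k + 1) * (centralBinom k : ℚ) ^ 4 / 256 ^ k := by
  induction n with
  | zero => simp [F, normalizer]
  | succ n ih =>
    rw [sum_range_succ_succ_of_wz F G n (F_succ_sub n), ih, F_diag_add_G, ← sum_range_succ]

end WZCentralBinom

/-- Σ_{k=0}^{n} 2^{−4k} C(2k,k)² /(n+k+1)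
    = (2^{4n}/((2n+1)² C(2n,n)²)) Σ_{k=0}^{n} (4k+1) 2^{−8k} C(2k,k)⁴. -/
theorem wz_sum_identity_two (n : ℕ) :
    ∑ k ∈ Finset.range (n + 1),
        (1 / 2 ^ (4 * k) : ℚ) * (Nat.choose (2 * k) k : ℚ) ^ 2 *
          (1 / ((n : ℚ) + (k : ℚ) + 1)) =
      2 ^ (4 * n) / ((2 * (n : ℚ) + 1) ^ 2 * (Nat.choose (2 * n) n : ℚ) ^ 2) *
        ∑ k ∈ Finset.range (n + 1),
          (4 * (k : ℚ) + 1) / 2 ^ (8 * k) * (Nat.choose (2 * k) k : ℚ) ^ 4 := by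
  simp only [← centralBinom_eq_two_mul_choose, pow_mul]
  norm_num only
  have hF : ∑ k ∈ range (n + 1), WZCentralBinom.F n k = WZCentralBinom.normalizer n *
      ∑ k ∈ range (n + 1), 1 / 16 ^ k * (centralBinom k : ℚ) ^ 2 * (1 / (n + k + 1)) := by
    rw [mul_sum]
    refine sum_congr rfl fun k _ => ?_
    rw [WZCentralBinom.F]
    field_simp
  have hT : ∑ k ∈ range (n + 1), (4 * k + 1) / 256 ^ k * (centralBinom k : ℚ) ^ 4 =
      ∑ k ∈ range (n + 1), WZCentralBinom.F n k := by
    rw [WZCentralBinom.sum_F]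
    exact sum_congr rfl fun k _ => by ring
  have := centralBinom_ne_zero n
  rw [hT, hF, WZCentralBinom.normalizer]
  field_simp
end

section
/- For every continuous function F : [0,1] → ℝ, one has ∫₀¹∫₀¹ F(|cos(2πt)·cos(2πs)|) ds dt = (4/π²)·∫₀¹ F(k)·K'(k) dk, where the right-hand integral is a convergent (Lebesgue) integral on (0,1). -/
/-!
By the symmetries of `|cos|`, the left-hand side is `(2/π)²` times the integral of
`F (cos θ * cos φ)` over the square `(0, π/2)²`. The substitution `sin θ = k' sin ψ`,
`cos θ cos φ = k`, with `k' = √(1 - k²)`, maps `(k, ψ) ∈ (0, 1) × (0, π/2)` bijectively onto that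
square, with Jacobian `(1 - k'² sin² ψ)^(-1/2)`. Integrating this Jacobian over `ψ` gives `K'(k)`,
and integrability of `F · K'` is inherited from the continuous integrand on the square.
-/

open MeasureTheory

/-- complete elliptic integral of the first kind, K(k) -/
noncomputable def Kel (k : ℝ) : ℝ :=
  ∫ θ in (0:ℝ)..(Real.pi / 2), (1 - k ^ 2 * Real.sin θ ^ 2) ^ (-(1:ℝ) / 2)

/-- K'(k) = K(√(1−k²)) -/
noncomputable def Kel' (k : ℝ) : ℝ := Kel (Real.sqrt (1 - k ^ 2))

open Real Set

theorem sin_pos_of_mem_Ioo_zero_pi_div_two {x : ℝ} (hx : x ∈ Ioo 0 (π / 2)) : 0 < sin x :=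
  sin_pos_of_pos_of_lt_pi hx.1 (by linarith [hx.2, pi_pos])

theorem cos_pos_of_mem_Ioo_zero_pi_div_two {x : ℝ} (hx : x ∈ Ioo 0 (π / 2)) : 0 < cos x :=
  cos_pos_of_mem_Ioo ⟨by linarith [hx.1, pi_pos], hx.2⟩

theorem integral_zero_one_comp_two_pi_mul {g : ℝ → ℝ} (hg : Continuous g)
    (hper : Function.Periodic g π) (hsymm : ∀ u, g (π - u) = g u) :
    ∫ t in (0:ℝ)..1, g (2 * π * t) = 2 / π * ∫ u in (0:ℝ)..(π / 2), g u := by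
  have hint : ∀ a b, IntervalIntegrable g volume a b := fun a b => hg.intervalIntegrable a b
  have hfull : ∫ u in (0:ℝ)..(2 * π), g u = 2 * ∫ u in (0:ℝ)..π, g u := by
    simpa using hper.intervalIntegral_add_zsmul_eq 2 0 hint
  have hreflect : ∫ u in (π / 2)..π, g u = ∫ u in (0:ℝ)..(π / 2), g u := by
    have := intervalIntegral.integral_comp_sub_left g π (a := 0) (b := π / 2)
    simp only [hsymm, sub_zero, sub_half] at this
    exact this.symm
  have hhalf : ∫ u in (0:ℝ)..π, g u = 2 * ∫ u in (0:ℝ)..(π / 2), g u := by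
    rw [← intervalIntegral.integral_add_adjacent_intervals (hint 0 (π / 2)) (hint (π / 2) π),
      hreflect, two_mul]
  rw [intervalIntegral.integral_comp_mul_left g (by positivity), mul_zero, mul_one, hfull, hhalf,
    smul_eq_mul]
  field_simp

theorem continuous_comp_abs_cos_mul_cos {F : ℝ → ℝ} (hF : ContinuousOn F (Icc 0 1)) :
    Continuous fun p : ℝ × ℝ => F |cos p.1 * cos p.2| :=
  hF.comp_continuous (by fun_prop) fun p => ⟨abs_nonneg _, by
    rw [abs_mul]; exact mul_le_one₀ (abs_cos_le_one _) (abs_nonneg _) (abs_cos_le_one _)⟩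

theorem integral_unit_square_comp_abs_cos_mul_cos {F : ℝ → ℝ} (hF : ContinuousOn F (Icc 0 1)) :
    ∫ t in (0:ℝ)..1, ∫ s in (0:ℝ)..1, F |cos (2 * π * t) * cos (2 * π * s)| =
      (2 / π) ^ 2 * ∫ θ in (0:ℝ)..(π / 2), ∫ φ in (0:ℝ)..(π / 2), F |cos θ * cos φ| := by
  have hcont := continuous_comp_abs_cos_mul_cos hF
  have hinner : ∀ θ, ∫ s in (0:ℝ)..1, F |cos θ * cos (2 * π * s)| =
      2 / π * ∫ φ in (0:ℝ)..(π / 2), F |cos θ * cos φ| := fun θ =>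
    integral_zero_one_comp_two_pi_mul
      (g := fun φ => F |cos θ * cos φ|) (hcont.comp (continuous_const.prodMk continuous_id))
      (fun φ => by simp only [cos_add_pi, mul_neg, abs_neg])
      (fun φ => by simp only [cos_pi_sub, mul_neg, abs_neg])
  have hparam : Continuous fun θ => ∫ φ in (0:ℝ)..(π / 2), F |cos θ * cos φ| :=
    intervalIntegral.continuous_parametric_intervalIntegral_of_continuous' hcont 0 (π / 2)
  have houter := integral_zero_one_comp_two_pi_mul hparam
    (fun θ => by simp only [cos_add_pi, neg_mul, abs_neg])
    (fun θ => by simp only [cos_pi_sub, neg_mul, abs_neg])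
  simp only [hinner, intervalIntegral.integral_const_mul, houter]
  ring

theorem ContinuousLinearMap.det_prod_eq (L : ℝ × ℝ →L[ℝ] ℝ × ℝ) :
    L.det = (L (1, 0)).1 * (L (0, 1)).2 - (L (0, 1)).1 * (L (1, 0)).2 := by
  rw [ContinuousLinearMap.det, ← LinearMap.det_toMatrix (Module.Basis.finTwoProd ℝ),
    Matrix.det_fin_two]
  simp [LinearMap.toMatrix_apply]

theorem HasFDerivAt.det_eq_of_hasDerivAt {f : ℝ × ℝ → ℝ × ℝ} {f' : ℝ × ℝ →L[ℝ] ℝ × ℝ}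
    {x u v : ℝ × ℝ} (hf : HasFDerivAt f f' x) (hu : HasDerivAt (fun a => f (a, x.2)) u x.1)
    (hv : HasDerivAt (fun b => f (x.1, b)) v x.2) :
    f'.det = u.1 * v.2 - v.1 * u.2 := by
  have hu' : f' (1, 0) = u :=
    (hf.comp_hasDerivAt x.1 ((hasDerivAt_id x.1).prodMk (hasDerivAt_const x.1 x.2))).unique hu
  have hv' : f' (0, 1) = v :=
    (hf.comp_hasDerivAt x.2 ((hasDerivAt_const x.2 x.1).prodMk (hasDerivAt_id x.2))).unique hv
  rw [f'.det_prod_eq, hu', hv']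

noncomputable def kel'Integrand (k ψ : ℝ) : ℝ := (1 - (1 - k ^ 2) * sin ψ ^ 2) ^ (-(1:ℝ) / 2)

noncomputable def ellipticMap (x : ℝ × ℝ) : ℝ × ℝ :=
  (arcsin (√(1 - x.1 ^ 2) * sin x.2), arccos (x.1 / √(1 - (1 - x.1 ^ 2) * sin x.2 ^ 2)))

noncomputable def ellipticMapInv (y : ℝ × ℝ) : ℝ × ℝ :=
  (cos y.1 * cos y.2, arcsin (sin y.1 / √(1 - (cos y.1 * cos y.2) ^ 2)))

section ellipticMap

variable {k ψ : ℝ}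

theorem one_sub_sq_pos_of_mem_Ioo (hk : k ∈ Ioo (0:ℝ) 1) : 0 < 1 - k ^ 2 := by
  nlinarith [hk.1, hk.2]

theorem sqrt_one_sub_sq_mul_sin_lt_one (hk : 0 < k) : √(1 - k ^ 2) * sin ψ < 1 := by
  have hc : √(1 - k ^ 2) < 1 := (sqrt_lt' one_pos).2 (by nlinarith)
  exact mul_lt_one_of_nonneg_of_lt_one_left (sqrt_nonneg _) hc (sin_le_one ψ)

theorem lt_sqrt_one_sub_one_sub_sq_mul_sin_sq (hk : k ∈ Ioo (0:ℝ) 1) (hψ : ψ ∈ Ioo 0 (π / 2)) :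
    k < √(1 - (1 - k ^ 2) * sin ψ ^ 2) := by
  have hC : 0 < cos ψ := cos_pos_of_mem_Ioo_zero_pi_div_two hψ
  rw [lt_sqrt hk.1.le]
  nlinarith [mul_pos (one_sub_sq_pos_of_mem_Ioo hk) (pow_pos hC 2), sin_sq_add_cos_sq ψ]

theorem sin_fst_ellipticMap (hk : 0 < k) (hψ : ψ ∈ Ioo 0 (π / 2)) :
    sin (ellipticMap (k, ψ)).1 = √(1 - k ^ 2) * sin ψ := by
  have hS : 0 < sin ψ := sin_pos_of_mem_Ioo_zero_pi_div_two hψ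
  exact sin_arcsin (by nlinarith [sqrt_nonneg (1 - k ^ 2)])
    (sqrt_one_sub_sq_mul_sin_lt_one hk).le

theorem cos_fst_ellipticMap (hk : k ^ 2 ≤ 1) :
    cos (ellipticMap (k, ψ)).1 = √(1 - (1 - k ^ 2) * sin ψ ^ 2) := by
  rw [ellipticMap, cos_arcsin, mul_pow, sq_sqrt (by linarith)]

theorem cos_snd_ellipticMap (hk : k ∈ Ioo (0:ℝ) 1) (hψ : ψ ∈ Ioo 0 (π / 2)) :
    cos (ellipticMap (k, ψ)).2 = k / √(1 - (1 - k ^ 2) * sin ψ ^ 2) := by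
  have hR := lt_sqrt_one_sub_one_sub_sq_mul_sin_sq hk hψ
  have hR0 : 0 < √(1 - (1 - k ^ 2) * sin ψ ^ 2) := hk.1.trans hR
  exact cos_arccos (by linarith [div_pos hk.1 hR0]) ((div_le_one hR0).2 hR.le)

theorem cos_mul_cos_ellipticMap (hk : k ∈ Ioo (0:ℝ) 1) (hψ : ψ ∈ Ioo 0 (π / 2)) :
    cos (ellipticMap (k, ψ)).1 * cos (ellipticMap (k, ψ)).2 = k := by
  have hR0 : 0 < √(1 - (1 - k ^ 2) * sin ψ ^ 2) :=
    hk.1.trans (lt_sqrt_one_sub_one_sub_sq_mul_sin_sq hk hψ)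
  rw [cos_fst_ellipticMap (by nlinarith [hk.1, hk.2]), cos_snd_ellipticMap hk hψ]
  field_simp

theorem mapsTo_ellipticMap :
    MapsTo ellipticMap (Ioo 0 1 ×ˢ Ioo 0 (π / 2)) (Ioo 0 (π / 2) ×ˢ Ioo 0 (π / 2)) := by
  rintro ⟨k, ψ⟩ ⟨hk, hψ⟩
  have hS : 0 < sin ψ := sin_pos_of_mem_Ioo_zero_pi_div_two hψ
  have hR := lt_sqrt_one_sub_one_sub_sq_mul_sin_sq hk hψ
  refine ⟨⟨arcsin_pos.2 (mul_pos (sqrt_pos.2 (one_sub_sq_pos_of_mem_Ioo hk)) hS),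
    arcsin_lt_pi_div_two.2 (sqrt_one_sub_sq_mul_sin_lt_one hk.1)⟩,
    arccos_pos.2 ((div_lt_one (hk.1.trans hR)).2 hR),
    arccos_lt_pi_div_two.2 (div_pos hk.1 (hk.1.trans hR))⟩

end ellipticMap

section ellipticMapInv

variable {θ φ : ℝ}

theorem cos_mul_cos_mem_Ioo_zero_cos (hθ : θ ∈ Ioo 0 (π / 2)) (hφ : φ ∈ Ioo 0 (π / 2)) :
    cos θ * cos φ ∈ Ioo 0 (cos θ) := by
  have hθ' : 0 < cos θ := cos_pos_of_mem_Ioo_zero_pi_div_two hθ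
  have hφ' : 0 < cos φ := cos_pos_of_mem_Ioo_zero_pi_div_two hφ
  have hφ1 : cos φ < 1 := by
    simpa using cos_lt_cos_of_nonneg_of_le_pi le_rfl (by linarith [hφ.2, pi_pos]) hφ.1
  exact ⟨mul_pos hθ' hφ', mul_lt_of_lt_one_right hθ' hφ1⟩

theorem cos_mul_cos_mem_Ioo (hθ : θ ∈ Ioo 0 (π / 2)) (hφ : φ ∈ Ioo 0 (π / 2)) :
    cos θ * cos φ ∈ Ioo (0:ℝ) 1 :=
  have h := cos_mul_cos_mem_Ioo_zero_cos hθ hφ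
  ⟨h.1, h.2.trans_le (cos_le_one θ)⟩

theorem sin_lt_sqrt_one_sub_cos_mul_cos_sq (hθ : θ ∈ Ioo 0 (π / 2)) (hφ : φ ∈ Ioo 0 (π / 2)) :
    sin θ < √(1 - (cos θ * cos φ) ^ 2) := by
  have h := cos_mul_cos_mem_Ioo_zero_cos hθ hφ
  rw [lt_sqrt (sin_pos_of_mem_Ioo_zero_pi_div_two hθ).le]
  nlinarith [sin_sq_add_cos_sq θ, h.1, h.2]

theorem mapsTo_ellipticMapInv :
    MapsTo ellipticMapInv (Ioo 0 (π / 2) ×ˢ Ioo 0 (π / 2)) (Ioo 0 1 ×ˢ Ioo 0 (π / 2)) := by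
  rintro ⟨θ, φ⟩ ⟨hθ, hφ⟩
  have hS : 0 < sin θ := sin_pos_of_mem_Ioo_zero_pi_div_two hθ
  have hc := sin_lt_sqrt_one_sub_cos_mul_cos_sq hθ hφ
  exact ⟨cos_mul_cos_mem_Ioo hθ hφ, arcsin_pos.2 (div_pos hS (hS.trans hc)),
    arcsin_lt_pi_div_two.2 ((div_lt_one (hS.trans hc)).2 hc)⟩

end ellipticMapInv

theorem leftInvOn_ellipticMapInv_ellipticMap :
    LeftInvOn ellipticMapInv ellipticMap (Ioo 0 1 ×ˢ Ioo 0 (π / 2)) := by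
  rintro ⟨k, ψ⟩ ⟨hk, hψ⟩
  have hc : √(1 - k ^ 2) ≠ 0 := (sqrt_pos.2 (one_sub_sq_pos_of_mem_Ioo hk)).ne'
  simp only [ellipticMapInv]
  rw [cos_mul_cos_ellipticMap hk hψ, sin_fst_ellipticMap hk.1 hψ, mul_div_cancel_left₀ _ hc,
    arcsin_sin (by linarith [hψ.1, pi_pos]) hψ.2.le]

theorem leftInvOn_ellipticMap_ellipticMapInv :
    LeftInvOn ellipticMap ellipticMapInv (Ioo 0 (π / 2) ×ˢ Ioo 0 (π / 2)) := by
  rintro ⟨θ, φ⟩ ⟨hθ, hφ⟩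
  have hS : 0 < sin θ := sin_pos_of_mem_Ioo_zero_pi_div_two hθ
  have hC : 0 < cos θ := cos_pos_of_mem_Ioo_zero_pi_div_two hθ
  have hlt := sin_lt_sqrt_one_sub_cos_mul_cos_sq hθ hφ
  simp only [ellipticMap, ellipticMapInv] at hlt ⊢
  set k := cos θ * cos φ
  have hc : 0 < √(1 - k ^ 2) := hS.trans hlt
  have hsin : sin (arcsin (sin θ / √(1 - k ^ 2))) = sin θ / √(1 - k ^ 2) :=
    sin_arcsin (by linarith [div_pos hS hc]) ((div_le_one hc).2 hlt.le)
  have hR : √(1 - (1 - k ^ 2) * (sin θ / √(1 - k ^ 2)) ^ 2) = cos θ := by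
    rw [div_pow, sq_sqrt (sqrt_pos.1 hc).le, mul_div_cancel₀ _ (sqrt_pos.1 hc).ne', ← cos_sq',
      sqrt_sq hC.le]
  rw [hsin, hR, mul_div_cancel₀ _ hc.ne', arcsin_sin (by linarith [hθ.1, pi_pos]) hθ.2.le,
    mul_div_cancel_left₀ _ hC.ne', arccos_cos hφ.1.le (by linarith [hφ.2, pi_pos])]

theorem bijOn_ellipticMap :
    BijOn ellipticMap (Ioo 0 1 ×ˢ Ioo 0 (π / 2)) (Ioo 0 (π / 2) ×ˢ Ioo 0 (π / 2)) :=
  InvOn.bijOn ⟨leftInvOn_ellipticMapInv_ellipticMap, leftInvOn_ellipticMap_ellipticMapInv⟩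
    mapsTo_ellipticMap mapsTo_ellipticMapInv

section ellipticMapDeriv

variable {k ψ : ℝ}

theorem sqrt_one_sub_div_sq_eq (hk : k ∈ Ioo (0:ℝ) 1) (hψ : ψ ∈ Ioo 0 (π / 2)) :
    √(1 - (k / √(1 - (1 - k ^ 2) * sin ψ ^ 2)) ^ 2) =
      √(1 - k ^ 2) * cos ψ / √(1 - (1 - k ^ 2) * sin ψ ^ 2) := by
  have hR := hk.1.trans (lt_sqrt_one_sub_one_sub_sq_mul_sin_sq hk hψ)
  have hC : 0 < cos ψ := cos_pos_of_mem_Ioo_zero_pi_div_two hψ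
  have hc := one_sub_sq_pos_of_mem_Ioo hk
  rw [← sqrt_sq (by positivity : 0 ≤ √(1 - k ^ 2) * cos ψ / √(1 - (1 - k ^ 2) * sin ψ ^ 2))]
  congr 1
  have hR2 := sqrt_pos.1 hR
  rw [div_pow, div_pow, mul_pow, sq_sqrt hR2.le, sq_sqrt hc.le, one_sub_div hR2.ne']
  congr 1
  linear_combination -(1 - k ^ 2) * sin_sq_add_cos_sq ψ

theorem sqrt_one_sub_sqrt_mul_sin_sq_eq (hk : k ^ 2 ≤ 1) :
    √(1 - (√(1 - k ^ 2) * sin ψ) ^ 2) = √(1 - (1 - k ^ 2) * sin ψ ^ 2) := by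
  rw [mul_pow, sq_sqrt (by linarith)]

theorem hasDerivAt_ellipticMap_fst_modulus (hk : k ∈ Ioo (0:ℝ) 1) (hψ : ψ ∈ Ioo 0 (π / 2)) :
    HasDerivAt (fun a => (ellipticMap (a, ψ)).1)
      (-(k * sin ψ) / (√(1 - k ^ 2) * √(1 - (1 - k ^ 2) * sin ψ ^ 2))) k := by
  have hc := one_sub_sq_pos_of_mem_Ioo hk
  have hS : 0 < sin ψ := sin_pos_of_mem_Ioo_zero_pi_div_two hψ
  have harg := (hasDerivAt_arcsin (by nlinarith [sqrt_pos.2 hc])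
    (sqrt_one_sub_sq_mul_sin_lt_one hk.1).ne).comp k
    ((((hasDerivAt_pow 2 k).const_sub 1).sqrt hc.ne').mul_const (sin ψ))
  refine harg.congr_deriv ?_
  rw [sqrt_one_sub_sqrt_mul_sin_sq_eq (by nlinarith [hk.1, hk.2])]
  field_simp
  ring

theorem hasDerivAt_ellipticMap_fst_angle (hk : k ∈ Ioo (0:ℝ) 1) (hψ : ψ ∈ Ioo 0 (π / 2)) :
    HasDerivAt (fun b => (ellipticMap (k, b)).1)
      (√(1 - k ^ 2) * cos ψ / √(1 - (1 - k ^ 2) * sin ψ ^ 2)) ψ := by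
  have hc := one_sub_sq_pos_of_mem_Ioo hk
  have hS : 0 < sin ψ := sin_pos_of_mem_Ioo_zero_pi_div_two hψ
  have harg := (hasDerivAt_arcsin (by nlinarith [sqrt_pos.2 hc])
    (sqrt_one_sub_sq_mul_sin_lt_one hk.1).ne).comp ψ ((hasDerivAt_sin ψ).const_mul √(1 - k ^ 2))
  refine harg.congr_deriv ?_
  rw [sqrt_one_sub_sqrt_mul_sin_sq_eq (by nlinarith [hk.1, hk.2])]
  ring

theorem hasDerivAt_ellipticMap_snd_modulus (hk : k ∈ Ioo (0:ℝ) 1) (hψ : ψ ∈ Ioo 0 (π / 2)) :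
    HasDerivAt (fun a => (ellipticMap (a, ψ)).2)
      (-cos ψ / (√(1 - k ^ 2) * √(1 - (1 - k ^ 2) * sin ψ ^ 2) ^ 2)) k := by
  have hc := one_sub_sq_pos_of_mem_Ioo hk
  have hkR := lt_sqrt_one_sub_one_sub_sq_mul_sin_sq hk hψ
  have hR := hk.1.trans hkR
  have hR2 := sqrt_pos.1 hR
  have hC : 0 < cos ψ := cos_pos_of_mem_Ioo_zero_pi_div_two hψ
  have hΔ : HasDerivAt (fun a => 1 - (1 - a ^ 2) * sin ψ ^ 2) (2 * k * sin ψ ^ 2) k := by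
    refine ((((hasDerivAt_pow 2 k).const_sub 1).mul_const (sin ψ ^ 2)).const_sub 1).congr_deriv ?_
    ring
  have harg := (hasDerivAt_arccos (by linarith [div_pos hk.1 hR])
    ((div_lt_one hR).2 hkR).ne).comp k ((hasDerivAt_id k).div (hΔ.sqrt hR2.ne') hR.ne')
  refine harg.congr_deriv ?_
  rw [sqrt_one_sub_div_sq_eq hk hψ]
  field_simp
  rw [sq_sqrt hR2.le, id]
  linear_combination sin_sq_add_cos_sq ψ

theorem hasDerivAt_ellipticMap_snd_angle (hk : k ∈ Ioo (0:ℝ) 1) (hψ : ψ ∈ Ioo 0 (π / 2)) :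
    HasDerivAt (fun b => (ellipticMap (k, b)).2)
      (-(k * √(1 - k ^ 2) * sin ψ) / √(1 - (1 - k ^ 2) * sin ψ ^ 2) ^ 2) ψ := by
  have hc := one_sub_sq_pos_of_mem_Ioo hk
  have hkR := lt_sqrt_one_sub_one_sub_sq_mul_sin_sq hk hψ
  have hR := hk.1.trans hkR
  have hR2 := sqrt_pos.1 hR
  have hC : 0 < cos ψ := cos_pos_of_mem_Ioo_zero_pi_div_two hψ
  have hΔ : HasDerivAt (fun b => 1 - (1 - k ^ 2) * sin b ^ 2)
      (-((1 - k ^ 2) * (2 * sin ψ * cos ψ))) ψ := by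
    refine ((((hasDerivAt_sin ψ).pow 2).const_mul (1 - k ^ 2)).const_sub 1).congr_deriv ?_
    ring
  have harg := (hasDerivAt_arccos (by linarith [div_pos hk.1 hR])
    ((div_lt_one hR).2 hkR).ne).comp ψ ((hasDerivAt_const ψ k).div (hΔ.sqrt hR2.ne') hR.ne')
  refine harg.congr_deriv ?_
  rw [sqrt_one_sub_div_sq_eq hk hψ]
  field_simp
  rw [sq_sqrt hc.le]
  ring

theorem differentiableAt_ellipticMap (hk : k ∈ Ioo (0:ℝ) 1) (hψ : ψ ∈ Ioo 0 (π / 2)) :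
    DifferentiableAt ℝ ellipticMap (k, ψ) := by
  have hc := one_sub_sq_pos_of_mem_Ioo hk
  have hkR := lt_sqrt_one_sub_one_sub_sq_mul_sin_sq hk hψ
  have hR := hk.1.trans hkR
  have hS : 0 < sin ψ := sin_pos_of_mem_Ioo_zero_pi_div_two hψ
  have hsqrt : DifferentiableAt ℝ (fun x : ℝ × ℝ => √(1 - x.1 ^ 2)) (k, ψ) :=
    (by fun_prop : DifferentiableAt ℝ (fun x : ℝ × ℝ => 1 - x.1 ^ 2) (k, ψ)).sqrt hc.ne'
  have hΔ : DifferentiableAt ℝ (fun x : ℝ × ℝ => √(1 - (1 - x.1 ^ 2) * sin x.2 ^ 2)) (k, ψ) :=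
    (by fun_prop : DifferentiableAt ℝ (fun x : ℝ × ℝ => 1 - (1 - x.1 ^ 2) * sin x.2 ^ 2)
      (k, ψ)).sqrt (sqrt_pos.1 hR).ne'
  have hu : DifferentiableAt ℝ (fun x : ℝ × ℝ => √(1 - x.1 ^ 2) * sin x.2) (k, ψ) :=
    hsqrt.mul (by fun_prop)
  have hv : DifferentiableAt ℝ (fun x : ℝ × ℝ => x.1 / √(1 - (1 - x.1 ^ 2) * sin x.2 ^ 2))
      (k, ψ) :=
    by fun_prop (disch := exact hR.ne')
  have hθ : DifferentiableAt ℝ (arcsin ∘ fun x : ℝ × ℝ => √(1 - x.1 ^ 2) * sin x.2) (k, ψ) :=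
    (differentiableAt_arcsin.2 ⟨by nlinarith [sqrt_pos.2 hc],
      (sqrt_one_sub_sq_mul_sin_lt_one hk.1).ne⟩).comp (k, ψ) hu
  have hφ : DifferentiableAt ℝ
      (arccos ∘ fun x : ℝ × ℝ => x.1 / √(1 - (1 - x.1 ^ 2) * sin x.2 ^ 2)) (k, ψ) :=
    (differentiableAt_arccos.2 ⟨by linarith [div_pos hk.1 hR],
      ((div_lt_one hR).2 hkR).ne⟩).comp (k, ψ) hv
  exact hθ.prodMk hφ

theorem abs_det_fderiv_ellipticMap (hk : k ∈ Ioo (0:ℝ) 1) (hψ : ψ ∈ Ioo 0 (π / 2)) :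
    |(fderiv ℝ ellipticMap (k, ψ)).det| = kel'Integrand k ψ := by
  have hc := one_sub_sq_pos_of_mem_Ioo hk
  have hR := hk.1.trans (lt_sqrt_one_sub_one_sub_sq_mul_sin_sq hk hψ)
  have hR2 := sqrt_pos.1 hR
  have hdet : (fderiv ℝ ellipticMap (k, ψ)).det = 1 / √(1 - (1 - k ^ 2) * sin ψ ^ 2) := by
    rw [(differentiableAt_ellipticMap hk hψ).hasFDerivAt.det_eq_of_hasDerivAt
      ((hasDerivAt_ellipticMap_fst_modulus hk hψ).prodMk (hasDerivAt_ellipticMap_snd_modulus hk hψ))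
      ((hasDerivAt_ellipticMap_fst_angle hk hψ).prodMk (hasDerivAt_ellipticMap_snd_angle hk hψ))]
    dsimp only
    have hRsq := sq_sqrt hR2.le
    set R := √(1 - (1 - k ^ 2) * sin ψ ^ 2)
    field_simp
    linear_combination sin_sq_add_cos_sq ψ - hRsq
  rw [hdet, abs_of_pos (by positivity), kel'Integrand, neg_div, rpow_neg hR2.le, ← sqrt_eq_rpow,
    one_div]

end ellipticMapDeriv

theorem Kel'_eq_setIntegral {k : ℝ} (hk : k ^ 2 ≤ 1) :
    Kel' k = ∫ ψ in Ioo 0 (π / 2), kel'Integrand k ψ := by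
  rw [Kel', Kel, sq_sqrt (by linarith), intervalIntegral.integral_of_le (by positivity),
    integral_Ioc_eq_integral_Ioo]
  rfl

theorem intervalIntegral_intervalIntegral_eq_setIntegral_prod {E : Type*} [NormedAddCommGroup E]
    [NormedSpace ℝ E] {f : ℝ × ℝ → E} {a b c d : ℝ}
    (hab : a ≤ b) (hcd : c ≤ d) (hf : IntegrableOn f (Ioo a b ×ˢ Ioo c d)) :
    ∫ x in a..b, ∫ y in c..d, f (x, y) = ∫ z in Ioo a b ×ˢ Ioo c d, f z := by
  simp only [intervalIntegral.integral_of_le hab, intervalIntegral.integral_of_le hcd,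
    integral_Ioc_eq_integral_Ioo]
  rw [Measure.volume_eq_prod, setIntegral_prod f hf]

theorem integral_kel'Integrand_mul_ae_eq (f : ℝ → ℝ) :
    (fun k => ∫ ψ in Ioo 0 (π / 2), kel'Integrand k ψ * f k) =ᵐ[volume.restrict (Ioo 0 1)]
      fun k => f k * Kel' k := by
  filter_upwards [self_mem_ae_restrict measurableSet_Ioo] with k hk
  rw [integral_mul_const, Kel'_eq_setIntegral (by nlinarith [hk.1, hk.2]), mul_comm]

theorem integrableOn_mul_Kel' {f : ℝ → ℝ}
    (hf : IntegrableOn (fun x : ℝ × ℝ => kel'Integrand x.1 x.2 * f x.1)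
      (Ioo 0 1 ×ˢ Ioo 0 (π / 2))) :
    IntegrableOn (fun k => f k * Kel' k) (Ioo 0 1) :=
  have hprod : Integrable (fun x : ℝ × ℝ => kel'Integrand x.1 x.2 * f x.1)
      ((volume.restrict (Ioo 0 1)).prod (volume.restrict (Ioo 0 (π / 2)))) := by
    rwa [Measure.prod_restrict]
  hprod.integral_prod_left.congr (integral_kel'Integrand_mul_ae_eq f)

theorem setIntegral_prod_eq_integral_mul_Kel' {f : ℝ → ℝ}
    (hf : IntegrableOn (fun x : ℝ × ℝ => kel'Integrand x.1 x.2 * f x.1)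
      (Ioo 0 1 ×ˢ Ioo 0 (π / 2))) :
    ∫ x in Ioo 0 1 ×ˢ Ioo 0 (π / 2), kel'Integrand x.1 x.2 * f x.1 =
      ∫ k in Ioo 0 1, f k * Kel' k := by
  rw [Measure.volume_eq_prod, setIntegral_prod _ hf]
  exact integral_congr_ae (integral_kel'Integrand_mul_ae_eq f)

theorem hasFDerivWithinAt_ellipticMap :
    ∀ x ∈ Ioo (0:ℝ) 1 ×ˢ Ioo 0 (π / 2),
      HasFDerivWithinAt ellipticMap (fderiv ℝ ellipticMap x) (Ioo 0 1 ×ˢ Ioo 0 (π / 2)) x := by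
  rintro ⟨k, ψ⟩ ⟨hk, hψ⟩
  exact (differentiableAt_ellipticMap hk hψ).hasFDerivAt.hasFDerivWithinAt

theorem eqOn_abs_det_fderiv_ellipticMap_smul (f : ℝ → ℝ) :
    EqOn (fun x => |(fderiv ℝ ellipticMap x).det| •
        f (cos (ellipticMap x).1 * cos (ellipticMap x).2))
      (fun x => kel'Integrand x.1 x.2 * f x.1) (Ioo 0 1 ×ˢ Ioo 0 (π / 2)) := by
  rintro ⟨k, ψ⟩ ⟨hk, hψ⟩
  simp only [smul_eq_mul, abs_det_fderiv_ellipticMap hk hψ, cos_mul_cos_ellipticMap hk hψ]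

theorem integrableOn_comp_cos_mul_cos_iff (f : ℝ → ℝ) :
    IntegrableOn (fun y : ℝ × ℝ => f (cos y.1 * cos y.2)) (Ioo 0 (π / 2) ×ˢ Ioo 0 (π / 2)) ↔
      IntegrableOn (fun x : ℝ × ℝ => kel'Integrand x.1 x.2 * f x.1) (Ioo 0 1 ×ˢ Ioo 0 (π / 2)) := by
  have hs := (isOpen_Ioo.prod isOpen_Ioo).measurableSet (s := Ioo (0:ℝ) 1 ×ˢ Ioo 0 (π / 2))
  rw [← bijOn_ellipticMap.image_eq, integrableOn_image_iff_integrableOn_abs_det_fderiv_smul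
    volume hs hasFDerivWithinAt_ellipticMap bijOn_ellipticMap.injOn]
  exact integrableOn_congr_fun (eqOn_abs_det_fderiv_ellipticMap_smul f) hs

theorem setIntegral_comp_cos_mul_cos (f : ℝ → ℝ) :
    ∫ y in Ioo 0 (π / 2) ×ˢ Ioo 0 (π / 2), f (cos y.1 * cos y.2) =
      ∫ x in Ioo 0 1 ×ˢ Ioo 0 (π / 2), kel'Integrand x.1 x.2 * f x.1 := by
  have hs := (isOpen_Ioo.prod isOpen_Ioo).measurableSet (s := Ioo (0:ℝ) 1 ×ˢ Ioo 0 (π / 2))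
  rw [← bijOn_ellipticMap.image_eq, integral_image_eq_integral_abs_det_fderiv_smul
    volume hs hasFDerivWithinAt_ellipticMap bijOn_ellipticMap.injOn]
  exact setIntegral_congr_fun hs (eqOn_abs_det_fderiv_ellipticMap_smul f)

/-- for continuous F : [0,1] → ℝ,
    ∫₀¹∫₀¹ F(|cos(2πt)cos(2πs)|) ds dt = (4/π²)·∫₀¹ F(k)K'(k) dk,
    the right-hand integral being a convergent Lebesgue integral on (0,1). -/
theorem density_integral_formula (F : ℝ → ℝ) (hF : ContinuousOn F (Set.Icc 0 1)) :
    IntegrableOn (fun k : ℝ => F k * Kel' k) (Set.Ioo 0 1) ∧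
    (∫ t in (0:ℝ)..1, ∫ s in (0:ℝ)..1,
        F |Real.cos (2 * Real.pi * t) * Real.cos (2 * Real.pi * s)|) =
      4 / Real.pi ^ 2 * ∫ k in Set.Ioo (0:ℝ) 1, F k * Kel' k := by
  have hsquare : IntegrableOn (fun y : ℝ × ℝ => F |cos y.1 * cos y.2|)
      (Ioo 0 (π / 2) ×ˢ Ioo 0 (π / 2)) :=
    ((continuous_comp_abs_cos_mul_cos hF).continuousOn.integrableOn_compact
      (isCompact_Icc.prod isCompact_Icc)).mono_set
      (prod_mono Ioo_subset_Icc_self Ioo_subset_Icc_self)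
  have hweighted := (integrableOn_comp_cos_mul_cos_iff fun k => F |k|).1 hsquare
  have habs : EqOn (fun k => F |k| * Kel' k) (fun k => F k * Kel' k) (Ioo 0 1) :=
    fun k hk => by simp only [abs_of_pos hk.1]
  refine ⟨(integrableOn_mul_Kel' hweighted).congr_fun habs measurableSet_Ioo, ?_⟩
  calc (∫ t in (0:ℝ)..1, ∫ s in (0:ℝ)..1, F |cos (2 * π * t) * cos (2 * π * s)|)
      = (2 / π) ^ 2 * ∫ y in Ioo 0 (π / 2) ×ˢ Ioo 0 (π / 2), F |cos y.1 * cos y.2| := by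
        rw [integral_unit_square_comp_abs_cos_mul_cos hF,
          intervalIntegral_intervalIntegral_eq_setIntegral_prod (by positivity) (by positivity)
            hsquare]
    _ = (2 / π) ^ 2 * ∫ x in Ioo 0 1 ×ˢ Ioo 0 (π / 2), kel'Integrand x.1 x.2 * F |x.1| := by
        rw [setIntegral_comp_cos_mul_cos fun k => F |k|]
    _ = (2 / π) ^ 2 * ∫ k in Ioo 0 1, F |k| * Kel' k :=
        congrArg _ (setIntegral_prod_eq_integral_mul_Kel' (f := fun k => F |k|) hweighted)
    _ = 4 / π ^ 2 * ∫ k in Ioo 0 1, F k * Kel' k := by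
        rw [setIntegral_congr_fun measurableSet_Ioo habs]
        ring
end
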